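/- arXiv:1002.4280 — 2 statements merged into one kernel-verified Lean document; each statement's English description precedes it below -/
import Mathlib

section
/- Let L ≅ H(m) ⊕ A(k) be the direct sum of a Heisenberg Lie algebra of dimension 2m+1 and an abelian Lie algebra of dimension k. Then L is capable if and only if m = 1. -/
open Module Function

universe u v

/-! ### Product of Lie algebras -/

section ProdLie

variable (k : Type) [Field k]
variable (L₁ : Type*) (L₂ : Type*) [LieRing L₁] [LieRing L₂]

instance Prod.instLieRing : LieRing (L₁ × L₂) where
  bracket x y := (⁅x.1, y.1⁆, ⁅x.2, y.2⁆)
  add_lie x y z := by ext <;> exact add_lie _ _ _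
  lie_add x y z := by ext <;> exact lie_add _ _ _
  lie_self x := by ext <;> exact lie_self _
  leibniz_lie x y z := by ext <;> exact leibniz_lie _ _ _

instance Prod.instLieAlgebra [LieAlgebra k L₁] [LieAlgebra k L₂] :
    LieAlgebra k (L₁ × L₂) where
  lie_smul c x y := by ext <;> exact lie_smul _ _ _

end ProdLie

section Defs

variable (k : Type) [Field k]
variable (L : Type u) [LieRing L] [LieAlgebra k L]

/-- The derived subalgebra `L² = ⁅L, L⁆` as a Lie ideal. -/
def derived : LieIdeal k L := ⁅(⊤ : LieIdeal k L), (⊤ : LieIdeal k L)⁆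

/-- A Lie algebra is capable if it is isomorphic to `H / Z(H)` for some Lie algebra `H`. -/
def IsCapable : Prop :=
  ∃ (H : Type u) (_ : LieRing H) (_ : LieAlgebra k H),
    Nonempty (L ≃ₗ⁅k⁆ H ⧸ LieAlgebra.center k H)

/-- A surjective Lie algebra morphism with central kernel. -/
def IsCentralExtension {E : Type u} [LieRing E] [LieAlgebra k E] (φ : E →ₗ⁅k⁆ L) : Prop :=
  Function.Surjective φ ∧ φ.ker ≤ LieAlgebra.center k E

/-- The epicenter `Z^*(L)`: the intersection of the images `φ(Z(E))` over all central
extensions `φ : E → L`. -/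
def epicenter : LieIdeal k L :=
  sInf {I : LieIdeal k L |
    ∃ (E : Type u) (_ : LieRing E) (_ : LieAlgebra k E) (φ : E →ₗ⁅k⁆ L),
      IsCentralExtension k L φ ∧ (I : Set L) = φ '' (LieAlgebra.center k E)}

/-! ### The nonabelian exterior square -/

/-- The defining relations of the nonabelian exterior square of a Lie algebra. -/
def exteriorRels : Set (FreeLieAlgebra k (L × L)) :=
  {a | (∃ (x x' y : L), a = FreeLieAlgebra.of k (x + x', y) - FreeLieAlgebra.of k (x, y)
          - FreeLieAlgebra.of k (x', y)) ∨
       (∃ (x y y' : L), a = FreeLieAlgebra.of k (x, y + y') - FreeLieAlgebra.of k (x, y)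
          - FreeLieAlgebra.of k (x, y')) ∨
       (∃ (c : k) (x y : L), a = FreeLieAlgebra.of k (c • x, y) - c • FreeLieAlgebra.of k (x, y)) ∨
       (∃ (c : k) (x y : L), a = FreeLieAlgebra.of k (x, c • y) - c • FreeLieAlgebra.of k (x, y)) ∨
       (∃ (x x' y : L), a = FreeLieAlgebra.of k (⁅x, x'⁆, y) - FreeLieAlgebra.of k (x, ⁅x', y⁆)
          + FreeLieAlgebra.of k (x', ⁅x, y⁆)) ∨
       (∃ (x y y' : L), a = FreeLieAlgebra.of k (x, ⁅y, y'⁆) - FreeLieAlgebra.of k (⁅y', x⁆, y)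
          + FreeLieAlgebra.of k (⁅y, x⁆, y')) ∨
       (∃ (x y x' y' : L), a = ⁅FreeLieAlgebra.of k (x, y), FreeLieAlgebra.of k (x', y')⁆
          + FreeLieAlgebra.of k (⁅y, x⁆, ⁅x', y'⁆)) ∨
       (∃ (x : L), a = FreeLieAlgebra.of k (x, x))}

/-- The ideal of relations of the nonabelian exterior square. -/
noncomputable def exteriorIdeal : LieIdeal k (FreeLieAlgebra k (L × L)) :=
  LieSubmodule.lieSpan k _ (exteriorRels k L)

/-- The nonabelian exterior square `L ∧ L`. -/
abbrev ExteriorSquare := FreeLieAlgebra k (L × L) ⧸ exteriorIdeal k L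

variable {L} in
/-- The element `x ∧ y` of the nonabelian exterior square. -/
noncomputable def wedge (x y : L) : ExteriorSquare k L :=
  LieSubmodule.Quotient.mk' (exteriorIdeal k L) (FreeLieAlgebra.of k (x, y))

/-- The exterior center `Z^∧(L) = {x | x ∧ y = 0 for all y}`. -/
def exteriorCenter : Set L := {x | ∀ y : L, wedge k x y = 0}

end Defs

section Defs2

variable (k : Type) [Field k]
variable (L : Type u) [LieRing L] [LieAlgebra k L]

/-- The canonical free presentation `F(L) → L`. -/
noncomputable def pres : FreeLieAlgebra k L →ₗ⁅k⁆ L := FreeLieAlgebra.lift k id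

/-- The Schur multiplier computed from a presentation `ρ : F(L) → L'`,
namely `(ker ρ ∩ F²) / ⁅ker ρ, F⁆`. -/
abbrev multOf {L' : Type v} [LieRing L'] [LieAlgebra k L']
    (ρ : FreeLieAlgebra k L →ₗ⁅k⁆ L') : Type _ :=
  (ρ.ker ⊓ derived k (FreeLieAlgebra k L)).toSubmodule ⧸
    ((⁅ρ.ker, (⊤ : LieIdeal k (FreeLieAlgebra k L))⁆ :
        LieIdeal k (FreeLieAlgebra k L)).toSubmodule.comap
      (ρ.ker ⊓ derived k (FreeLieAlgebra k L)).toSubmodule.subtype)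

/-- The Schur multiplier `M(L) = (R ∩ F²)/⁅R, F⁆` for the canonical free
presentation `0 → R → F(L) → L → 0`. -/
noncomputable abbrev SchurMultiplier : Type _ := multOf k L (pres k L)

/-- The quotient map `L → L ⧸ N` as a morphism of Lie algebras. -/
def lieQuotMk (N : LieIdeal k L) : L →ₗ⁅k⁆ L ⧸ N :=
  { toLinearMap := (N : Submodule k L).mkQ
    map_lie' := rfl }

/-- The canonical presentation `F(L) → L ⧸ N` of a quotient of `L`. -/
noncomputable def presQ (N : LieIdeal k L) : FreeLieAlgebra k L →ₗ⁅k⁆ L ⧸ N :=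
  (lieQuotMk k L N).comp (pres k L)

end Defs2

section maps

variable (k : Type) [Field k]
variable (L : Type u) [LieRing L] [LieAlgebra k L]

lemma ker_le_kerQ (N : LieIdeal k L) : (pres k L).ker ≤ (presQ k L N).ker := by
  intro x hx
  rw [LieHom.mem_ker] at hx ⊢
  simp [presQ, LieHom.comp_apply, hx, lieQuotMk]

/-- The natural map `M(L) → M(L/N)` on Schur multipliers induced by a
(central) ideal `N` of `L`. -/
noncomputable def multMap (N : LieIdeal k L) :
    SchurMultiplier k L →ₗ[k] multOf k L (presQ k L N) :=
  Submodule.mapQ _ _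
    (Submodule.inclusion (by
      exact_mod_cast inf_le_inf_right (derived k (FreeLieAlgebra k L)) (ker_le_kerQ k L N)))
    (by
      intro x hx
      simp only [Submodule.mem_comap] at hx ⊢
      have hmono : (⁅(pres k L).ker, (⊤ : LieIdeal k (FreeLieAlgebra k L))⁆ :
          LieIdeal k (FreeLieAlgebra k L)) ≤
          ⁅(presQ k L N).ker, (⊤ : LieIdeal k (FreeLieAlgebra k L))⁆ :=
        LieSubmodule.mono_lie_left _ (ker_le_kerQ k L N)
      exact hmono hx)

end maps

section lift

variable {k : Type} [Field k]
variable {L : Type u} [LieRing L] [LieAlgebra k L]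
variable {L' : Type v} [LieRing L'] [LieAlgebra k L']

/-- Universal property of quotients of Lie algebras. -/
def lieQuotLift (I : LieIdeal k L) (f : L →ₗ⁅k⁆ L') (h : I ≤ f.ker) : (L ⧸ I) →ₗ⁅k⁆ L' :=
  { toLinearMap := (I : Submodule k L).liftQ f.toLinearMap (fun x hx => by
      have := h hx; rwa [LieHom.mem_ker] at this)
    map_lie' := by
      rintro ⟨x⟩ ⟨y⟩
      exact f.map_lie x y }

@[simp] lemma lieQuotLift_mk (I : LieIdeal k L) (f : L →ₗ⁅k⁆ L') (h : I ≤ f.ker) (x : L) :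
    lieQuotLift I f h (lieQuotMk k L I x) = f x := rfl

end lift

section extmaps

variable (k : Type) [Field k]
variable (L : Type u) [LieRing L] [LieAlgebra k L]

/-- `x ∧ y` rewritten via the quotient morphism. -/
lemma wedge_def (x y : L) :
    wedge k x y = lieQuotMk k _ (exteriorIdeal k L) (FreeLieAlgebra.of k (x, y)) := rfl

/-- The lift to the free Lie algebra of the map `(x, y) ↦ x ∧ y` valued in the
exterior square of a quotient of `L`. -/
noncomputable def extAux (N : LieIdeal k L) :
    FreeLieAlgebra k (L × L) →ₗ⁅k⁆ ExteriorSquare k (L ⧸ N) :=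
  FreeLieAlgebra.lift k fun p => wedge k (lieQuotMk k L N p.1) (lieQuotMk k L N p.2)

lemma wedge_mem_rel_zero {M : Type v} [LieRing M] [LieAlgebra k M]
    {a : FreeLieAlgebra k (M × M)} (ha : a ∈ exteriorRels k M) :
    lieQuotMk k _ (exteriorIdeal k M) a = 0 := by
  have h : a ∈ exteriorIdeal k M := LieSubmodule.subset_lieSpan ha
  show (exteriorIdeal k M : Submodule k (FreeLieAlgebra k (M × M))).mkQ a = 0
  rw [Submodule.mkQ_apply, Submodule.Quotient.mk_eq_zero]
  exact h

lemma extAux_rels (N : LieIdeal k L) : exteriorIdeal k L ≤ (extAux k L N).ker := by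
  rw [exteriorIdeal, LieSubmodule.lieSpan_le]
  intro a ha
  rw [SetLike.mem_coe, LieHom.mem_ker]
  set q := lieQuotMk k L N with hq
  have key : ∀ x y : L, extAux k L N (FreeLieAlgebra.of k (x, y)) =
      lieQuotMk k _ (exteriorIdeal k (L ⧸ N)) (FreeLieAlgebra.of k (q x, q y)) := by
    intro x y; rw [extAux, FreeLieAlgebra.lift_of_apply]; rfl
  obtain h|h|h|h|h|h|h|h := ha
  · obtain ⟨x, x', y, rfl⟩ := h
    simp only [map_sub, key]
    rw [← map_sub, ← map_sub]
    apply wedge_mem_rel_zero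
    exact Or.inl ⟨q x, q x', q y, by rw [map_add]⟩
  · obtain ⟨x, y, y', rfl⟩ := h
    simp only [map_sub, key]
    rw [← map_sub, ← map_sub]
    apply wedge_mem_rel_zero
    exact Or.inr (Or.inl ⟨q x, q y, q y', by rw [map_add]⟩)
  · obtain ⟨c, x, y, rfl⟩ := h
    simp only [map_sub, map_smul, key]
    rw [← map_smul (lieQuotMk k _ (exteriorIdeal k (L ⧸ N))) c
      (FreeLieAlgebra.of k (q x, q y)), ← map_sub]
    apply wedge_mem_rel_zero
    exact Or.inr (Or.inr (Or.inl ⟨c, q x, q y, rfl⟩))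
  · obtain ⟨c, x, y, rfl⟩ := h
    simp only [map_sub, map_smul, key]
    rw [← map_smul (lieQuotMk k _ (exteriorIdeal k (L ⧸ N))) c
      (FreeLieAlgebra.of k (q x, q y)), ← map_sub]
    apply wedge_mem_rel_zero
    exact Or.inr (Or.inr (Or.inr (Or.inl ⟨c, q x, q y, rfl⟩)))
  · obtain ⟨x, x', y, rfl⟩ := h
    simp only [map_sub, map_add, key]
    rw [← map_sub, ← map_add]
    apply wedge_mem_rel_zero
    refine Or.inr (Or.inr (Or.inr (Or.inr (Or.inl ⟨q x, q x', q y, ?_⟩))))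
    simp [LieHom.map_lie]
  · obtain ⟨x, y, y', rfl⟩ := h
    simp only [map_sub, map_add, key]
    rw [← map_sub, ← map_add]
    apply wedge_mem_rel_zero
    refine Or.inr (Or.inr (Or.inr (Or.inr (Or.inr (Or.inl ⟨q x, q y, q y', ?_⟩)))))
    simp [LieHom.map_lie]
  · obtain ⟨x, y, x', y', rfl⟩ := h
    simp only [map_add, LieHom.map_lie, key]
    rw [← LieHom.map_lie, ← map_add]
    apply wedge_mem_rel_zero
    refine Or.inr (Or.inr (Or.inr (Or.inr (Or.inr (Or.inr (Or.inl
      ⟨q x, q y, q x', q y', ?_⟩))))))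
    simp [LieHom.map_lie]
  · obtain ⟨x, rfl⟩ := h
    rw [key]
    apply wedge_mem_rel_zero
    exact Or.inr (Or.inr (Or.inr (Or.inr (Or.inr (Or.inr (Or.inr ⟨q x, rfl⟩))))))

/-- The natural morphism `L ∧ L → (L/N) ∧ (L/N)` of exterior squares. -/
noncomputable def extSqMap (N : LieIdeal k L) :
    ExteriorSquare k L →ₗ⁅k⁆ ExteriorSquare k (L ⧸ N) :=
  lieQuotLift (exteriorIdeal k L) (extAux k L N) (extAux_rels k L N)

/-- The commutator morphism `L ∧ L → L`, `x ∧ y ↦ ⁅x, y⁆`. -/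
noncomputable def commutatorMap : ExteriorSquare k L →ₗ⁅k⁆ L :=
  lieQuotLift (exteriorIdeal k L) (FreeLieAlgebra.lift k fun p : L × L => ⁅p.1, p.2⁆)
    (by
      rw [exteriorIdeal, LieSubmodule.lieSpan_le]
      intro a ha
      rw [SetLike.mem_coe, LieHom.mem_ker]
      obtain h|h|h|h|h|h|h|h := ha
      · obtain ⟨x, x', y, rfl⟩ := h
        simp [FreeLieAlgebra.lift_of_apply, add_lie]
      · obtain ⟨x, y, y', rfl⟩ := h
        simp [FreeLieAlgebra.lift_of_apply, lie_add]
      · obtain ⟨c, x, y, rfl⟩ := h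
        simp [FreeLieAlgebra.lift_of_apply, smul_lie]
      · obtain ⟨c, x, y, rfl⟩ := h
        simp [FreeLieAlgebra.lift_of_apply, lie_smul]
      · obtain ⟨x, x', y, rfl⟩ := h
        simp only [map_sub, map_add, FreeLieAlgebra.lift_of_apply, lie_lie]
        abel
      · obtain ⟨x, y, y', rfl⟩ := h
        simp only [map_sub, map_add, FreeLieAlgebra.lift_of_apply, lie_lie]
        rw [leibniz_lie x y' y, ← lie_skew y ⁅x, y'⁆]
        abel
      · obtain ⟨x, y, x', y', rfl⟩ := h
        simp only [map_add, LieHom.map_lie, FreeLieAlgebra.lift_of_apply]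
        rw [← lie_skew y x]
        simp
      · obtain ⟨x, rfl⟩ := h
        simp [FreeLieAlgebra.lift_of_apply])

end extmaps

section more

variable (k : Type) [Field k]
variable (L : Type u) [LieRing L] [LieAlgebra k L]

/-- A Lie algebra is a Heisenberg algebra `H(m)` (of dimension `2m + 1`) iff its derived
subalgebra coincides with its centre and is one-dimensional, and it has dimension `2m + 1`. -/
def IsHeisenberg (m : ℕ) : Prop :=
  derived k L = LieAlgebra.center k L ∧ Module.finrank k L = 2 * m + 1 ∧
    Module.finrank k (derived k L) = 1

/-- A vector space regarded as an abelian Lie algebra. -/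
def AbelianLieOf (V : Type v) : Type v := V

instance (V : Type v) [AddCommGroup V] : AddCommGroup (AbelianLieOf V) :=
  inferInstanceAs (AddCommGroup V)

instance (V : Type v) [AddCommGroup V] [Module k V] : Module k (AbelianLieOf V) :=
  inferInstanceAs (Module k V)

instance (V : Type v) [AddCommGroup V] : LieRing (AbelianLieOf V) where
  bracket _ _ := 0
  add_lie _ _ _ := by simp
  lie_add _ _ _ := by simp
  lie_self _ := rfl
  leibniz_lie _ _ _ := by simp

instance (V : Type v) [AddCommGroup V] [Module k V] : LieAlgebra k (AbelianLieOf V) where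
  lie_smul _ _ _ := by
    show (0 : AbelianLieOf V) = _ • (0 : AbelianLieOf V)
    simp

/-- A decomposition of `L` as the direct sum of a Heisenberg algebra `H(m)` and an
abelian Lie algebra of dimension `j`. -/
structure HeisenbergAbelianDecomp (m j : ℕ) where
  H : Type u
  A : Type u
  [instHL : LieRing H]
  [instHA : LieAlgebra k H]
  [instAL : LieRing A]
  [instAA : LieAlgebra k A]
  heis : IsHeisenberg k H m
  abel : IsLieAbelian A
  dimA : Module.finrank k A = j
  equiv : Nonempty (L ≃ₗ⁅k⁆ H × A)

/-- The projection `H × A → H` as a Lie algebra morphism. -/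
def lieFst (H A : Type u) [LieRing H] [LieAlgebra k H] [LieRing A] [LieAlgebra k A] :
    H × A →ₗ⁅k⁆ H :=
  { toLinearMap := LinearMap.fst k H A
    map_lie' := rfl }

end more

/-!
If `m ≥ 2`, let `z` span `H² = Z(H)`. The centralizer of any `x ∈ H` has dimension at least
`2m`, while an abelian subspace of codimension one has dimension at most
`dim Z(H) + dim H² = 2`; so the centralizer, which is `H` or of codimension one, is not
abelian, and `z = ⁅a, b⁆` with `a`, `b` centralizing `x`. If `H × A ≅ E ⧸ Z(E)`, take `f ∈ E` and such `a`, `b` for its image, and lift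
`a`, `b`, `z` to `E`: then `⁅f, a⁆` and `⁅f, b⁆` are central, so by the Jacobi identity `f`
commutes with the lift of `z`. Hence that lift is central and `z = 0`, a contradiction.

If `m = 1`, `H × A` is the central quotient of an explicit algebra: the free nilpotent Lie
algebra of class 3 on two generators `x, y`, extended by `A × A` on which `x` acts by
`(a, c) ↦ (0, a)`. The twist is needed because a one-dimensional abelian algebra is not
capable.
-/

section LieAlgebra

variable {k : Type} [Field k] {L : Type u} [LieRing L] [LieAlgebra k L]

lemma lie_mem_derived (x y : L) : ⁅x, y⁆ ∈ derived k L :=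
  LieSubmodule.lie_mem_lie (LieSubmodule.mem_top x) (LieSubmodule.mem_top y)

lemma exists_lie_ne_zero_of_derived_ne_bot (h : derived k L ≠ ⊥) : ∃ x y : L, ⁅x, y⁆ ≠ 0 := by
  contrapose! h
  rw [derived, LieSubmodule.lie_eq_bot_iff]
  exact fun x _ y _ ↦ h x y

lemma linearIndependent_of_lie_mem_center {x y : L} (hxy : ⁅x, y⁆ ≠ 0)
    (hc : ⁅x, y⁆ ∈ LieAlgebra.center k L) : LinearIndependent k ![x, y, ⁅x, y⁆] := by
  have hz : ∀ w : L, ⁅⁅x, y⁆, w⁆ = 0 := fun w ↦ by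
    rw [← lie_skew, (LieModule.mem_maxTrivSubmodule k L L _).mp hc w, neg_zero]
  rw [Fintype.linearIndependent_iff]
  intro g hg
  simp only [Fin.sum_univ_three, Matrix.cons_val_zero, Matrix.cons_val_one,
    Matrix.cons_val_two, Matrix.head_cons, Matrix.tail_cons] at hg
  have h0 : g 0 = 0 := by
    have := congrArg (⁅·, y⁆) hg
    simp only [add_lie, smul_lie, lie_self, hz, smul_zero, add_zero, zero_lie] at this
    exact (smul_eq_zero.mp this).resolve_right hxy
  have h1 : g 1 = 0 := by
    have hyx : ⁅y, x⁆ = -⁅x, y⁆ := by rw [← lie_skew]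
    have := congrArg (⁅·, x⁆) hg
    simp only [add_lie, smul_lie, lie_self, hz, hyx, smul_zero, add_zero, zero_add, zero_lie,
      smul_neg, neg_eq_zero] at this
    exact (smul_eq_zero.mp this).resolve_right hxy
  have h2 : g 2 = 0 := by
    rw [h0, h1, zero_smul, zero_smul, zero_add, zero_add] at hg
    exact (smul_eq_zero.mp hg).resolve_right hxy
  intro i
  fin_cases i <;> assumption

lemma finrank_le_finrank_ker_ad_add_finrank_derived [FiniteDimensional k L] (x : L) :
    finrank k L ≤ finrank k (LinearMap.ker (LieAlgebra.ad k L x)) + finrank k (derived k L) := by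
  have hrange : LinearMap.range (LieAlgebra.ad k L x) ≤ (derived k L : Submodule k L) := by
    rintro _ ⟨w, rfl⟩
    exact lie_mem_derived x w
  have h₁ : finrank k (LinearMap.range (LieAlgebra.ad k L x)) ≤ finrank k (derived k L) :=
    Submodule.finrank_mono hrange
  have := LinearMap.finrank_range_add_finrank_ker (LieAlgebra.ad k L x)
  omega

/-- Bracketing with `h₀` embeds `W ⧸ (W ∩ Z(L))` into `L²`. -/
lemma finrank_le_of_lie_eq_zero_of_sup_span_eq_top [FiniteDimensional k L] {W : Submodule k L}
    (hW : ∀ a ∈ W, ∀ b ∈ W, ⁅a, b⁆ = 0) {h₀ : L} (hsup : W ⊔ Submodule.span k {h₀} = ⊤) :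
    finrank k W ≤ finrank k (LieAlgebra.center k L) + finrank k (derived k L) := by
  set θ : W →ₗ[k] L := LieAlgebra.ad k L h₀ ∘ₗ W.subtype
  have hrange : LinearMap.range θ ≤ (derived k L : Submodule k L) := by
    rintro _ ⟨w, rfl⟩
    exact lie_mem_derived h₀ (w : L)
  have hker : (LinearMap.ker θ).map W.subtype ≤ (LieAlgebra.center k L : Submodule k L) := by
    rintro _ ⟨w, hw, rfl⟩
    refine (LieModule.mem_maxTrivSubmodule k L L _).mpr fun y ↦ ?_
    obtain ⟨u, hu, v, hv, rfl⟩ := Submodule.mem_sup.mp (hsup ▸ Submodule.mem_top : y ∈ _)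
    obtain ⟨c, rfl⟩ := Submodule.mem_span_singleton.mp hv
    have hw' : ⁅h₀, (w : L)⁆ = 0 := hw
    rw [Submodule.subtype_apply, add_lie, hW u hu w w.2, smul_lie, hw', smul_zero, add_zero]
  have h₁ : finrank k (LinearMap.range θ) ≤ finrank k (derived k L) :=
    Submodule.finrank_mono hrange
  have h₂ : finrank k (LinearMap.ker θ) ≤ finrank k (LieAlgebra.center k L) :=
    (Submodule.finrank_map_subtype_eq W _).symm.trans_le (Submodule.finrank_mono hker)
  have := LinearMap.finrank_range_add_finrank_ker θ
  omega

end LieAlgebra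

namespace IsHeisenberg

variable {k : Type} [Field k] {H : Type u} [LieRing H] [LieAlgebra k H] {m : ℕ}

lemma finiteDimensional (hH : IsHeisenberg k H m) : FiniteDimensional k H :=
  Module.finite_of_finrank_pos (by rw [hH.2.1]; omega)

lemma lie_mem_center (hH : IsHeisenberg k H m) (x y : H) : ⁅x, y⁆ ∈ LieAlgebra.center k H := by
  rw [← hH.1]; exact lie_mem_derived x y

lemma exists_lie_ne_zero (hH : IsHeisenberg k H m) : ∃ x y : H, ⁅x, y⁆ ≠ 0 := by
  refine exists_lie_ne_zero_of_derived_ne_bot (k := k) fun h ↦ ?_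
  have : finrank k (derived k H).toSubmodule = 1 := hH.2.2
  rw [h, LieSubmodule.bot_toSubmodule, finrank_bot] at this
  exact zero_ne_one this

lemma one_le (hH : IsHeisenberg k H m) : 1 ≤ m := by
  have := hH.finiteDimensional
  obtain ⟨x, y, hxy⟩ := hH.exists_lie_ne_zero
  have := (linearIndependent_of_lie_mem_center hxy (hH.lie_mem_center x y)).fintype_card_le_finrank
  simp only [Fintype.card_fin, hH.2.1] at this
  omega

lemma exists_lie_ne_zero_of_mem_centralizer (hH : IsHeisenberg k H m) (hm : 2 ≤ m) (x : H) :
    ∃ a b : H, ⁅a, x⁆ = 0 ∧ ⁅b, x⁆ = 0 ∧ ⁅a, b⁆ ≠ 0 := by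
  have := hH.finiteDimensional
  set W := LinearMap.ker (LieAlgebra.ad k H x)
  have hmem : ∀ w, w ∈ W ↔ ⁅w, x⁆ = 0 := fun w ↦ by
    rw [LinearMap.mem_ker, LieAlgebra.ad_apply, ← lie_skew, neg_eq_zero]
  by_contra! hW
  replace hW : ∀ a ∈ W, ∀ b ∈ W, ⁅a, b⁆ = 0 := fun a ha b hb ↦
    hW a b ((hmem a).mp ha) ((hmem b).mp hb)
  obtain ⟨h₀, hh₀⟩ : ∃ h₀, h₀ ∉ W := by
    by_contra! hall
    obtain ⟨a, b, hab⟩ := hH.exists_lie_ne_zero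
    exact hab (hW a (hall a) b (hall b))
  have hW2m : 2 * m ≤ finrank k W := by
    have := finrank_le_finrank_ker_ad_add_finrank_derived (k := k) x
    change _ ≤ finrank k W + _ at this
    rw [hH.2.1, hH.2.2] at this
    omega
  have hsup : W ⊔ Submodule.span k {h₀} = ⊤ := by
    have hlt : W < W ⊔ Submodule.span k {h₀} :=
      lt_of_le_of_ne le_sup_left fun h ↦
        hh₀ (h ▸ Submodule.mem_sup_right (Submodule.mem_span_singleton_self h₀))
    have := Submodule.finrank_lt_finrank_of_lt hlt
    have := Submodule.finrank_le (W ⊔ Submodule.span k {h₀})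
    exact Submodule.eq_top_of_finrank_eq (by rw [hH.2.1] at *; omega)
  have := finrank_le_of_lie_eq_zero_of_sup_span_eq_top hW hsup
  rw [← hH.1, hH.2.2] at this
  omega

lemma exists_ne_zero_forall_exists_lie_eq (hH : IsHeisenberg k H m) (hm : 2 ≤ m) :
    ∃ z : H, z ≠ 0 ∧ ∀ x : H, ∃ a b : H, ⁅a, b⁆ = z ∧ ⁅a, x⁆ = 0 ∧ ⁅b, x⁆ = 0 := by
  have : Nontrivial (derived k H) := Module.nontrivial_of_finrank_eq_succ hH.2.2
  obtain ⟨z, hz⟩ := exists_ne (0 : derived k H)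
  refine ⟨z, fun h ↦ hz (Subtype.ext h), fun x ↦ ?_⟩
  obtain ⟨a, b, ha, hb, hab⟩ := hH.exists_lie_ne_zero_of_mem_centralizer hm x
  obtain ⟨c, hc⟩ := (finrank_eq_one_iff_of_nonzero' z hz).mp hH.2.2 ⟨_, lie_mem_derived a b⟩
  have hc' : c • (z : H) = ⁅a, b⁆ := congrArg Subtype.val hc
  have hc0 : c ≠ 0 := by
    rintro rfl
    exact hab (by rw [← hc', zero_smul])
  refine ⟨c⁻¹ • a, b, ?_, by rw [smul_lie, ha, smul_zero], hb⟩
  rw [smul_lie, ← hc', smul_smul, inv_mul_cancel₀ hc0, one_smul]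

end IsHeisenberg

section Capable

variable {k : Type} [Field k] {L : Type u} [LieRing L] [LieAlgebra k L]

lemma eq_zero_of_forall_exists_lie_eq_of_quotient_center {E : Type u} [LieRing E]
    [LieAlgebra k E] {z : E ⧸ LieAlgebra.center k E}
    (hz : ∀ x : E ⧸ LieAlgebra.center k E, ∃ a b : E ⧸ LieAlgebra.center k E,
      ⁅a, b⁆ = z ∧ ⁅a, x⁆ = 0 ∧ ⁅b, x⁆ = 0) : z = 0 := by
  set π := lieQuotMk k E (LieAlgebra.center k E)
  have hπ : ∀ e : E, π e = 0 ↔ e ∈ LieAlgebra.center k E := fun _ ↦ Submodule.Quotient.mk_eq_zero _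
  have hcen : ∀ e, e ∈ LieAlgebra.center k E → ∀ f : E, ⁅f, e⁆ = 0 :=
    fun e he ↦ (LieModule.mem_maxTrivSubmodule k E E e).mp he
  obtain ⟨ζ, rfl⟩ := Submodule.Quotient.mk_surjective _ z
  refine (hπ ζ).mpr ((LieModule.mem_maxTrivSubmodule k E E ζ).mpr fun f ↦ ?_)
  obtain ⟨a', b', hab, ha, hb⟩ := hz (π f)
  obtain ⟨a, rfl⟩ := Submodule.Quotient.mk_surjective _ a'
  obtain ⟨b, rfl⟩ := Submodule.Quotient.mk_surjective _ b'
  have hζ : ζ - ⁅a, b⁆ ∈ LieAlgebra.center k E := by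
    rw [← hπ, map_sub, π.map_lie]
    exact sub_eq_zero.mpr hab.symm
  have hfa : ⁅f, a⁆ ∈ LieAlgebra.center k E := by
    rw [← hπ, π.map_lie, ← lie_skew]
    exact neg_eq_zero.mpr ha
  have hfb : ⁅f, b⁆ ∈ LieAlgebra.center k E := by
    rw [← hπ, π.map_lie, ← lie_skew]
    exact neg_eq_zero.mpr hb
  calc ⁅f, ζ⁆ = ⁅f, ζ - ⁅a, b⁆⁆ + (⁅⁅f, a⁆, b⁆ + ⁅a, ⁅f, b⁆⁆) := by
        rw [← leibniz_lie, ← lie_add, sub_add_cancel]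
    _ = 0 := by
        rw [hcen _ hζ, hcen _ hfb, ← lie_skew, hcen _ hfa, neg_zero, zero_add, add_zero]

lemma IsCapable.eq_zero_of_forall_exists_lie_eq (hL : IsCapable k L) {z : L}
    (hz : ∀ x : L, ∃ a b : L, ⁅a, b⁆ = z ∧ ⁅a, x⁆ = 0 ∧ ⁅b, x⁆ = 0) : z = 0 := by
  obtain ⟨E, _, _, ⟨e⟩⟩ := hL
  refine e.injective ((eq_zero_of_forall_exists_lie_eq_of_quotient_center fun x ↦ ?_).trans
    (map_zero e).symm)
  obtain ⟨a, b, hab, ha, hb⟩ := hz (e.symm x)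
  refine ⟨e a, e b, by rw [← e.map_lie, hab]; rfl, ?_, ?_⟩
  · rw [← e.apply_symm_apply x, ← e.map_lie, ha, map_zero]
  · rw [← e.apply_symm_apply x, ← e.map_lie, hb, map_zero]

lemma isCapable_of_surjective_of_ker_eq_center {E : Type u} [LieRing E] [LieAlgebra k E]
    (f : E →ₗ⁅k⁆ L) (hf : Surjective f) (hker : f.ker = LieAlgebra.center k E) :
    IsCapable k L := by
  set g := lieQuotLift (LieAlgebra.center k E) f hker.ge
  have hg : Bijective g := by
    refine ⟨?_, fun y ↦ ?_⟩
    · rintro ⟨p⟩ ⟨q⟩ h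
      have hpq : p - q ∈ f.ker := by
        rw [LieHom.mem_ker, map_sub, sub_eq_zero]
        exact h
      exact (Submodule.Quotient.eq _).mpr (hker ▸ hpq)
    · obtain ⟨e, rfl⟩ := hf y
      exact ⟨Submodule.Quotient.mk e, rfl⟩
  exact ⟨E, inferInstance, inferInstance, ⟨(LieEquiv.ofBijective g hg).symm⟩⟩

end Capable

lemma not_isCapable_prod_of_isHeisenberg {k : Type} [Field k] {H A : Type u} [LieRing H]
    [LieAlgebra k H] [LieRing A] [LieAlgebra k A] {m : ℕ} (hH : IsHeisenberg k H m)
    (hm : 2 ≤ m) : ¬ IsCapable k (H × A) := by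
  intro hcap
  obtain ⟨z, hz0, hz⟩ := hH.exists_ne_zero_forall_exists_lie_eq hm
  refine hz0 (congrArg Prod.fst (hcap.eq_zero_of_forall_exists_lie_eq (z := (z, 0)) fun x ↦ ?_))
  obtain ⟨a, b, hab, ha, hb⟩ := hz x.1
  exact ⟨(a, 0), (b, 0), Prod.ext hab (lie_zero 0), Prod.ext ha (zero_lie x.2),
    Prod.ext hb (zero_lie x.2)⟩

/-- The Lie algebra `k⁵ × A × A` with coordinates `(x, y, z, u, v, a, c)`: the `k⁵` part is the
free nilpotent Lie algebra of class 3 on `x, y` (with `z = ⁅x, y⁆`, `u = ⁅x, z⁆`, `v = ⁅y, z⁆`),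
and `x` maps `a` to the second copy `c` of `A`. -/
def HeisenbergAbelianCover (k : Type) (A : Type u) : Type u := (k × k × k × k × k) × A × A

namespace HeisenbergAbelianCover

section Module

variable {k : Type} [Field k] {A : Type u} [AddCommGroup A] [Module k A]

instance : AddCommGroup (HeisenbergAbelianCover k A) :=
  inferInstanceAs (AddCommGroup ((k × k × k × k × k) × A × A))

instance : Module k (HeisenbergAbelianCover k A) :=
  inferInstanceAs (Module k ((k × k × k × k × k) × A × A))

/-- The identity; the coordinates are read through it so that `simp` can use the product
lemmas (`Prod.fst_add`, `Prod.smul_fst`, ...). -/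
def equivProd : HeisenbergAbelianCover k A ≃ₗ[k] (k × k × k × k × k) × A × A :=
  LinearEquiv.refl k _

@[simp] def x (p : HeisenbergAbelianCover k A) : k := (equivProd p).1.1
@[simp] def y (p : HeisenbergAbelianCover k A) : k := (equivProd p).1.2.1
@[simp] def z (p : HeisenbergAbelianCover k A) : k := (equivProd p).1.2.2.1
@[simp] def u (p : HeisenbergAbelianCover k A) : k := (equivProd p).1.2.2.2.1
@[simp] def v (p : HeisenbergAbelianCover k A) : k := (equivProd p).1.2.2.2.2
@[simp] def a (p : HeisenbergAbelianCover k A) : A := (equivProd p).2.1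
@[simp] def c (p : HeisenbergAbelianCover k A) : A := (equivProd p).2.2

@[simp] def mk (x y z u v : k) (a c : A) : HeisenbergAbelianCover k A :=
  equivProd.symm ((x, y, z, u, v), a, c)

@[ext]
lemma ext {p q : HeisenbergAbelianCover k A} (hx : p.x = q.x) (hy : p.y = q.y) (hz : p.z = q.z)
    (hu : p.u = q.u) (hv : p.v = q.v) (ha : p.a = q.a) (hc : p.c = q.c) : p = q :=
  equivProd.injective <|
    Prod.ext (Prod.ext hx (Prod.ext hy (Prod.ext hz (Prod.ext hu hv)))) (Prod.ext ha hc)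

instance : LieRing (HeisenbergAbelianCover k A) where
  bracket p q := mk 0 0 (p.x * q.y - q.x * p.y) (p.x * q.z - q.x * p.z) (p.y * q.z - q.y * p.z)
    0 (p.x • q.a - q.x • p.a)
  add_lie p q r := by ext <;> simp <;> first | ring1 | module
  lie_add p q r := by ext <;> simp <;> first | ring1 | module
  lie_self p := by ext <;> simp
  leibniz_lie p q r := by ext <;> simp <;> ring

lemma lie_def (p q : HeisenbergAbelianCover k A) :
    ⁅p, q⁆ = mk 0 0 (p.x * q.y - q.x * p.y) (p.x * q.z - q.x * p.z) (p.y * q.z - q.y * p.z)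
      0 (p.x • q.a - q.x • p.a) := rfl

instance : LieAlgebra k (HeisenbergAbelianCover k A) where
  lie_smul t p q := by ext <;> simp [lie_def, smul_sub, smul_smul] <;> first | ring1 | module

lemma mem_center_iff (p : HeisenbergAbelianCover k A) :
    p ∈ LieAlgebra.center k (HeisenbergAbelianCover k A) ↔
      p.x = 0 ∧ p.y = 0 ∧ p.z = 0 ∧ p.a = 0 := by
  rw [LieModule.mem_maxTrivSubmodule]
  refine ⟨fun h ↦ ?_, fun ⟨hx, hy, hz, ha⟩ q ↦ ?_⟩
  · have h₁ := h (mk 1 0 0 0 0 0 0)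
    have h₂ := h (mk 0 1 0 0 0 0 0)
    simp [lie_def] at h₁ h₂
    exact ⟨h₂.1, h₁.1.1, h₁.1.2, h₁.2⟩
  · ext <;> simp_all [lie_def]

end Module

variable {k : Type} [Field k] {H A : Type u} [LieRing H] [LieAlgebra k H] [LieRing A]
  [LieAlgebra k A] [IsLieAbelian A] {X Y : H}

def toProd (hc : ⁅X, Y⁆ ∈ LieAlgebra.center k H) : HeisenbergAbelianCover k A →ₗ⁅k⁆ H × A where
  toFun p := (p.x • X + p.y • Y + p.z • ⁅X, Y⁆, p.a)
  map_add' p q :=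
    Prod.ext (by simp only [x, y, z, map_add, Prod.fst_add, Prod.snd_add, add_smul]; abel) (by simp)
  map_smul' t p := by ext <;> simp [smul_add, smul_smul]
  map_lie' {p q} := by
    have hZ : ∀ w : H, ⁅⁅X, Y⁆, w⁆ = 0 := fun w ↦ by
      rw [← lie_skew, (LieModule.mem_maxTrivSubmodule k H H _).mp hc w, neg_zero]
    have hYX : ⁅Y, X⁆ = -⁅X, Y⁆ := by rw [← lie_skew]
    refine Prod.ext ?_ (trivial_lie_zero A A _ _).symm
    show _ = ⁅p.x • X + p.y • Y + p.z • ⁅X, Y⁆, q.x • X + q.y • Y + q.z • ⁅X, Y⁆⁆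
    simp only [lie_def, lie_add, add_lie, lie_smul, smul_lie, lie_self, hZ, hYX,
      (LieModule.mem_maxTrivSubmodule k H H _).mp hc, x, y, z, mk, LinearEquiv.apply_symm_apply]
    module

lemma toProd_apply (hc : ⁅X, Y⁆ ∈ LieAlgebra.center k H) (p : HeisenbergAbelianCover k A) :
    toProd hc p = (p.x • X + p.y • Y + p.z • ⁅X, Y⁆, p.a) := rfl

lemma ker_toProd (hc : ⁅X, Y⁆ ∈ LieAlgebra.center k H)
    (hli : LinearIndependent k ![X, Y, ⁅X, Y⁆]) :
    (toProd (A := A) hc).ker = LieAlgebra.center k (HeisenbergAbelianCover k A) := by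
  ext p
  rw [LieHom.mem_ker, mem_center_iff, toProd_apply, Prod.mk_eq_zero]
  constructor
  · rintro ⟨h, ha⟩
    have hcoord : ∀ i, ![p.x, p.y, p.z] i = 0 :=
      Fintype.linearIndependent_iff.mp hli _ (by simpa [Fin.sum_univ_three] using h)
    exact ⟨hcoord 0, hcoord 1, hcoord 2, ha⟩
  · rintro ⟨hx, hy, hz, ha⟩
    rw [hx, hy, hz, ha]
    simp

lemma surjective_toProd (hc : ⁅X, Y⁆ ∈ LieAlgebra.center k H)
    (hspan : Submodule.span k (Set.range ![X, Y, ⁅X, Y⁆]) = ⊤) :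
    Surjective (toProd (A := A) hc) := by
  rintro ⟨h, a⟩
  obtain ⟨f, hf⟩ :=
    (Submodule.mem_span_range_iff_exists_fun k).mp (hspan ▸ Submodule.mem_top : h ∈ _)
  refine ⟨mk (f 0) (f 1) (f 2) 0 0 a 0, ?_⟩
  rw [toProd_apply, ← hf, Fin.sum_univ_three]
  simp

end HeisenbergAbelianCover

lemma isCapable_prod_of_isHeisenberg_one {k : Type} [Field k] {H A : Type u} [LieRing H]
    [LieAlgebra k H] [LieRing A] [LieAlgebra k A] [IsLieAbelian A] (hH : IsHeisenberg k H 1) :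
    IsCapable k (H × A) := by
  obtain ⟨X, Y, hXY⟩ := hH.exists_lie_ne_zero
  have hc := hH.lie_mem_center X Y
  have hli := linearIndependent_of_lie_mem_center hXY hc
  have hspan : Submodule.span k (Set.range ![X, Y, ⁅X, Y⁆]) = ⊤ := by
    have := hH.finiteDimensional
    exact hli.span_eq_top_of_card_eq_finrank (by simp [hH.2.1])
  exact isCapable_of_surjective_of_ker_eq_center (HeisenbergAbelianCover.toProd hc)
    (HeisenbergAbelianCover.surjective_toProd hc hspan) (HeisenbergAbelianCover.ker_toProd hc hli)

theorem heisenberg_sum_abelian_capable_iff_general (k : Type) [Field k] (H A : Type u) [LieRing H]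
    [LieAlgebra k H] [LieRing A] [LieAlgebra k A]
    (m : ℕ) (hH : IsHeisenberg k H m) (hA : IsLieAbelian A) :
    IsCapable k (H × A) ↔ m = 1 := by
  refine ⟨fun hcap ↦ ?_, ?_⟩
  · by_contra hm
    exact not_isCapable_prod_of_isHeisenberg hH (by have := hH.one_le; omega) hcap
  · rintro rfl
    exact isCapable_prod_of_isHeisenberg_one hH

/-- `H(m) ⊕ A(j)` is capable iff `m = 1`. -/
theorem heisenberg_sum_abelian_capable_iff (k : Type) [Field k] (H A : Type u) [LieRing H]
    [LieAlgebra k H] [LieRing A] [LieAlgebra k A] [Module.Finite k H] [Module.Finite k A]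
    (m j : ℕ) (hm : 1 ≤ m) (hH : IsHeisenberg k H m) (hA : IsLieAbelian A)
    (hAd : Module.finrank k A = j) :
    IsCapable k (H × A) ↔ m = 1 :=
  heisenberg_sum_abelian_capable_iff_general k H A m hH hA
end

section
/- For m ≥ 2 and any k ≥ 0, setting L = H(m) ⊕ A(k), the natural map L ∧ L → (L/H(m)²) ∧ (L/H(m)²) is an isomorphism; in particular L is not capable. -/
open Module Function

universe u v

/-!
Let `L = H(m) ⊕ A`. Its derived algebra is the line spanned by `z = ⁅a, b⁆`, and since `m ≥ 2`
(a dimension count) there are `c, d` commuting with `a, b` and with `⁅c, d⁆ = z`. Then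
`z ∧ y = a ∧ ⁅b, y⁆ - b ∧ ⁅a, y⁆` is a combination of `a ∧ z` and `b ∧ z`, and
`a ∧ z = a ∧ ⁅c, d⁆ = ⁅d, a⁆ ∧ c - ⁅c, a⁆ ∧ d = 0`, likewise `b ∧ z = 0`: the derived algebra lies
in the exterior centre `Z^∧(L)`. As wedges do not see `Z^∧(L)`, the map
`L ∧ L → (L/L²) ∧ (L/L²)` has the inverse `u ∧ v ↦ s u ∧ s v` for any linear section `s`.

For non-capability, `Z^∧(L)` lies in the epicentre: for a central extension `φ : E → L` with
linear section `s`, `x ∧ y ↦ ⁅s x, s y⁆` is well defined on `L ∧ L`, so `x ∈ Z^∧(L)` makes `s x`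
central. If `L ≅ E/Z(E)`, the extension `E → L` has `φ(Z(E)) = 0`, which would force `z = 0`.
-/

section Wedge

variable {k : Type} [Field k] {L : Type u} [LieRing L] [LieAlgebra k L]

lemma wedge_add_left (x x' y : L) : wedge k (x + x') y = wedge k x y + wedge k x' y := by
  have h := wedge_mem_rel_zero k (Or.inl ⟨x, x', y, rfl⟩)
  rwa [map_sub, map_sub, sub_sub, sub_eq_zero] at h

lemma wedge_add_right (x y y' : L) : wedge k x (y + y') = wedge k x y + wedge k x y' := by
  have h := wedge_mem_rel_zero k (Or.inr (Or.inl ⟨x, y, y', rfl⟩))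
  rwa [map_sub, map_sub, sub_sub, sub_eq_zero] at h

lemma wedge_smul_left (c : k) (x y : L) : wedge k (c • x) y = c • wedge k x y := by
  have h := wedge_mem_rel_zero k (Or.inr (Or.inr (Or.inl ⟨c, x, y, rfl⟩)))
  rwa [map_sub, map_smul, sub_eq_zero] at h

lemma wedge_smul_right (c : k) (x y : L) : wedge k x (c • y) = c • wedge k x y := by
  have h := wedge_mem_rel_zero k (Or.inr (Or.inr (Or.inr (Or.inl ⟨c, x, y, rfl⟩))))
  rwa [map_sub, map_smul, sub_eq_zero] at h

lemma wedge_lie_left (x x' y : L) :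
    wedge k ⁅x, x'⁆ y = wedge k x ⁅x', y⁆ - wedge k x' ⁅x, y⁆ := by
  have h := wedge_mem_rel_zero k (Or.inr (Or.inr (Or.inr (Or.inr (Or.inl ⟨x, x', y, rfl⟩)))))
  rw [map_add, map_sub] at h
  rw [eq_sub_iff_add_eq]
  rwa [sub_add_eq_add_sub, sub_eq_zero] at h

lemma wedge_lie_right (x y y' : L) :
    wedge k x ⁅y, y'⁆ = wedge k ⁅y', x⁆ y - wedge k ⁅y, x⁆ y' := by
  have h := wedge_mem_rel_zero k
    (Or.inr (Or.inr (Or.inr (Or.inr (Or.inr (Or.inl ⟨x, y, y', rfl⟩))))))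
  rw [map_add, map_sub] at h
  rw [eq_sub_iff_add_eq]
  rwa [sub_add_eq_add_sub, sub_eq_zero] at h

lemma lie_wedge_wedge (x y x' y' : L) :
    ⁅wedge k x y, wedge k x' y'⁆ = -wedge k ⁅y, x⁆ ⁅x', y'⁆ := by
  have h := wedge_mem_rel_zero k
    (Or.inr (Or.inr (Or.inr (Or.inr (Or.inr (Or.inr (Or.inl ⟨x, y, x', y', rfl⟩)))))))
  rw [map_add, LieHom.map_lie] at h
  exact eq_neg_of_add_eq_zero_left h

lemma wedge_self (x : L) : wedge k x x = 0 :=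
  wedge_mem_rel_zero k (Or.inr (Or.inr (Or.inr (Or.inr (Or.inr (Or.inr (Or.inr ⟨x, rfl⟩)))))))

variable (k L) in
noncomputable def wedgeBilin : L →ₗ[k] L →ₗ[k] ExteriorSquare k L :=
  LinearMap.mk₂ k (wedge k) wedge_add_left wedge_smul_left wedge_add_right wedge_smul_right

@[simp] lemma wedgeBilin_apply (x y : L) : wedgeBilin k L x y = wedge k x y := rfl

@[simp] lemma wedge_zero_left (y : L) : wedge k (0 : L) y = 0 :=
  (wedgeBilin k L).map_zero₂ y

@[simp] lemma wedge_zero_right (x : L) : wedge k x (0 : L) = 0 :=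
  ((wedgeBilin k L) x).map_zero

lemma wedge_swap (x y : L) : wedge k y x = -wedge k x y := by
  have h := wedge_self (k := k) (x + y)
  rw [wedge_add_left, wedge_add_right, wedge_add_right, wedge_self, wedge_self, zero_add,
    add_zero, add_eq_zero_iff_eq_neg] at h
  rw [h, neg_neg]

end Wedge

section Lift

variable {k : Type} [Field k] {L : Type u} [LieRing L] [LieAlgebra k L]
variable {M : Type v} [LieRing M] [LieAlgebra k M]

/-- Ellis' Lie exterior pairings, the bilinear maps through which `L ∧ L` is universal. -/
structure IsExteriorPairing (f : L →ₗ[k] L →ₗ[k] M) : Prop where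
  lie_left : ∀ x x' y, f ⁅x, x'⁆ y = f x ⁅x', y⁆ - f x' ⁅x, y⁆
  lie_right : ∀ x y y', f x ⁅y, y'⁆ = f ⁅y', x⁆ y - f ⁅y, x⁆ y'
  lie_apply : ∀ x y x' y', ⁅f x y, f x' y'⁆ = -f ⁅y, x⁆ ⁅x', y'⁆
  apply_self : ∀ x, f x x = 0

namespace ExteriorSquare

lemma exteriorIdeal_le_ker {f : L →ₗ[k] L →ₗ[k] M} (hf : IsExteriorPairing f) :
    exteriorIdeal k L ≤ (FreeLieAlgebra.lift k fun p : L × L => f p.1 p.2).ker := by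
  rw [exteriorIdeal, LieSubmodule.lieSpan_le]
  rintro a (⟨x, x', y, rfl⟩ | ⟨x, y, y', rfl⟩ | ⟨c, x, y, rfl⟩ | ⟨c, x, y, rfl⟩ |
    ⟨x, x', y, rfl⟩ | ⟨x, y, y', rfl⟩ | ⟨x, y, x', y', rfl⟩ | ⟨x, rfl⟩) <;>
  simp only [SetLike.mem_coe, LieHom.mem_ker, map_add, map_sub, map_smul, LieHom.map_lie,
    FreeLieAlgebra.lift_of_apply]
  · simp
  · simp
  · simp
  · simp
  · rw [hf.lie_left]; abel
  · rw [hf.lie_right]; abel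
  · rw [hf.lie_apply, neg_add_cancel]
  · exact hf.apply_self x

noncomputable def lift (f : L →ₗ[k] L →ₗ[k] M) (hf : IsExteriorPairing f) :
    ExteriorSquare k L →ₗ⁅k⁆ M :=
  lieQuotLift (exteriorIdeal k L) _ (exteriorIdeal_le_ker hf)

@[simp] lemma lift_wedge {f : L →ₗ[k] L →ₗ[k] M} (hf : IsExteriorPairing f) (x y : L) :
    lift f hf (wedge k x y) = f x y :=
  FreeLieAlgebra.lift_of_apply _ _

lemma hom_ext {g g' : ExteriorSquare k L →ₗ⁅k⁆ M}
    (h : ∀ x y, g (wedge k x y) = g' (wedge k x y)) : g = g' := by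
  have hcomp : g.comp (lieQuotMk k _ (exteriorIdeal k L)) = g'.comp (lieQuotMk k _ _) :=
    FreeLieAlgebra.hom_ext fun p => h p.1 p.2
  ext t
  obtain ⟨a, rfl⟩ := Submodule.mkQ_surjective _ t
  exact LieHom.congr_fun hcomp a

end ExteriorSquare

end Lift

section ExteriorCenter

variable {k : Type} [Field k] {L : Type u} [LieRing L] [LieAlgebra k L]

lemma wedge_eq_zero_of_right_mem_exteriorCenter {z : L} (hz : z ∈ exteriorCenter k L) (x : L) :
    wedge k x z = 0 := by
  rw [wedge_swap, hz x, neg_zero]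

lemma smul_mem_exteriorCenter (c : k) {z : L} (hz : z ∈ exteriorCenter k L) :
    c • z ∈ exteriorCenter k L := fun y => by
  rw [wedge_smul_left, hz y, smul_zero]

lemma wedge_congr_of_sub_mem_exteriorCenter {x x' y y' : L} (hx : x' - x ∈ exteriorCenter k L)
    (hy : y' - y ∈ exteriorCenter k L) : wedge k x' y' = wedge k x y := by
  rw [← add_sub_cancel x x', ← add_sub_cancel y y', wedge_add_left, wedge_add_right,
    wedge_add_right, hx, hx, wedge_eq_zero_of_right_mem_exteriorCenter hy, add_zero, add_zero,
    add_zero]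

lemma derived_le_span_singleton {z : L} (hz : ∀ x y : L, ⁅x, y⁆ ∈ k ∙ z) :
    (derived k L : Submodule k L) ≤ k ∙ z := by
  rw [derived, LieIdeal.toLieSubalgebra_toSubmodule, LieSubmodule.lieIdeal_oper_eq_linear_span,
    Submodule.span_le]
  rintro _ ⟨x, y, rfl⟩
  exact hz x y

def IsBracketOfCommutingPairs (z : L) : Prop :=
  ∃ a b c d : L, ⁅a, b⁆ = z ∧ ⁅c, d⁆ = z ∧ ⁅c, a⁆ = 0 ∧ ⁅c, b⁆ = 0 ∧ ⁅d, a⁆ = 0 ∧ ⁅d, b⁆ = 0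

lemma IsBracketOfCommutingPairs.map {L' : Type v} [LieRing L'] [LieAlgebra k L'] {z : L}
    (f : L →ₗ⁅k⁆ L') (h : IsBracketOfCommutingPairs z) : IsBracketOfCommutingPairs (f z) := by
  obtain ⟨a, b, c, d, hab, hcd, hca, hcb, hda, hdb⟩ := h
  refine ⟨f a, f b, f c, f d, ?_, ?_, ?_, ?_, ?_, ?_⟩ <;>
    simp only [← LieHom.map_lie, hab, hcd, hca, hcb, hda, hdb, map_zero]

lemma IsBracketOfCommutingPairs.mem_exteriorCenter {z : L} (h : IsBracketOfCommutingPairs z)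
    (hz : ∀ x y : L, ⁅x, y⁆ ∈ k ∙ z) : z ∈ exteriorCenter k L := by
  obtain ⟨a, b, c, d, hab, hcd, hca, hcb, hda, hdb⟩ := h
  have haz : wedge k a z = 0 := by rw [← hcd, wedge_lie_right, hda, hca]; simp
  have hbz : wedge k b z = 0 := by rw [← hcd, wedge_lie_right, hdb, hcb]; simp
  intro y
  obtain ⟨e, he⟩ := Submodule.mem_span_singleton.1 (hz b y)
  obtain ⟨e', he'⟩ := Submodule.mem_span_singleton.1 (hz a y)
  rw [← hab, wedge_lie_left, ← he, ← he', wedge_smul_right, wedge_smul_right, haz, hbz,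
    smul_zero, smul_zero, sub_zero]

lemma IsBracketOfCommutingPairs.derived_subset_exteriorCenter {z : L}
    (h : IsBracketOfCommutingPairs z) (hz : ∀ x y : L, ⁅x, y⁆ ∈ k ∙ z) :
    (derived k L : Set L) ⊆ exteriorCenter k L := fun _ hw => by
  obtain ⟨c, rfl⟩ := Submodule.mem_span_singleton.1 (derived_le_span_singleton hz hw)
  exact smul_mem_exteriorCenter c (h.mem_exteriorCenter hz)

end ExteriorCenter

section Bijective

variable {k : Type} [Field k] {L : Type u} [LieRing L] [LieAlgebra k L]

lemma extSqMap_wedge (N : LieIdeal k L) (x y : L) :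
    extSqMap k L N (wedge k x y) = wedge k (lieQuotMk k L N x) (lieQuotMk k L N y) :=
  FreeLieAlgebra.lift_of_apply _ _

lemma lie_eq_zero_of_quotient_derived (u v : L ⧸ derived k L) : ⁅u, v⁆ = 0 := by
  obtain ⟨x, rfl⟩ := LieSubmodule.Quotient.surjective_mk' _ u
  obtain ⟨y, rfl⟩ := LieSubmodule.Quotient.surjective_mk' _ v
  rw [LieSubmodule.Quotient.mk'_apply, LieSubmodule.Quotient.mk'_apply,
    ← LieSubmodule.Quotient.mk_bracket, LieSubmodule.Quotient.mk_eq_zero']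
  exact LieSubmodule.lie_mem_lie (LieSubmodule.mem_top x) (LieSubmodule.mem_top y)

theorem extSqMap_derived_bijective (h : (derived k L : Set L) ⊆ exteriorCenter k L) :
    Bijective (extSqMap k L (derived k L)) := by
  obtain ⟨s, hs⟩ := (lieQuotMk k L (derived k L)).toLinearMap.exists_rightInverse_of_surjective
    (LinearMap.range_eq_top.2 (Submodule.mkQ_surjective _))
  have hs' (u : L ⧸ derived k L) : lieQuotMk k L (derived k L) (s u) = u :=
    LinearMap.congr_fun hs u
  have hsec (x : L) : s (lieQuotMk k L (derived k L) x) - x ∈ exteriorCenter k L := by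
    refine h ((LieSubmodule.Quotient.mk_eq_zero' (N := derived k L)).1 ?_)
    exact (map_sub (lieQuotMk k L (derived k L)) _ _).trans (by rw [hs', sub_self])
  have hpair : IsExteriorPairing ((wedgeBilin k L).compl₁₂ s s) :=
    { lie_left := by simp [lie_eq_zero_of_quotient_derived]
      lie_right := by simp [lie_eq_zero_of_quotient_derived]
      lie_apply := fun u v u' v' => by
        have hvu := h (LieSubmodule.lie_mem_lie (LieSubmodule.mem_top (s v))
          (LieSubmodule.mem_top (s u)))
        simp [lie_wedge_wedge, lie_eq_zero_of_quotient_derived, hvu _]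
      apply_self := by simp [wedge_self] }
  set ψ := ExteriorSquare.lift _ hpair
  have hleft : ψ.comp (extSqMap k L (derived k L)) = LieHom.id :=
    ExteriorSquare.hom_ext fun x y => by
      simp [ψ, extSqMap_wedge, wedge_congr_of_sub_mem_exteriorCenter (hsec x) (hsec y)]
  have hright : (extSqMap k L (derived k L)).comp ψ = LieHom.id :=
    ExteriorSquare.hom_ext fun u v => by
      simp [ψ, extSqMap_wedge, hs']
  exact bijective_iff_has_inverse.2
    ⟨ψ, LieHom.congr_fun hleft, LieHom.congr_fun hright⟩

end Bijective

section CentralExtension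

variable {k : Type} [Field k] {L : Type u} [LieRing L] [LieAlgebra k L]
variable {E : Type u} [LieRing E] [LieAlgebra k E]

lemma lie_right_eq_of_sub_mem_center {u u' : E} (h : u - u' ∈ LieAlgebra.center k E) (w : E) :
    ⁅w, u⁆ = ⁅w, u'⁆ := by
  have := (LieModule.mem_maxTrivSubmodule k E E _).1 h w
  rwa [lie_sub, sub_eq_zero] at this

lemma lie_left_eq_of_sub_mem_center {u u' : E} (h : u - u' ∈ LieAlgebra.center k E) (w : E) :
    ⁅u, w⁆ = ⁅u', w⁆ := by
  rw [← lie_skew, lie_right_eq_of_sub_mem_center h, lie_skew]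

namespace IsCentralExtension

variable {φ : E →ₗ⁅k⁆ L} (hφ : IsCentralExtension k L φ)

section Section

variable {s : L →ₗ[k] E} (hs : ∀ x, φ (s x) = x)
include hφ hs

lemma sub_section_mem_center (w : E) : w - s (φ w) ∈ LieAlgebra.center k E :=
  hφ.2 (by rw [LieHom.mem_ker, map_sub, hs, sub_self])

lemma section_lie_sub_mem_center (x y : L) :
    s ⁅x, y⁆ - ⁅s x, s y⁆ ∈ LieAlgebra.center k E :=
  hφ.2 (by rw [LieHom.mem_ker, map_sub, LieHom.map_lie, hs, hs, hs, sub_self])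

lemma isExteriorPairing_section :
    IsExteriorPairing ((LieModule.toEnd k E E : E →ₗ[k] Module.End k E).compl₁₂ s s) := by
  have hl (x y : L) (w : E) : ⁅s ⁅x, y⁆, w⁆ = ⁅⁅s x, s y⁆, w⁆ :=
    lie_left_eq_of_sub_mem_center (hφ.section_lie_sub_mem_center hs x y) w
  have hr (x y : L) (w : E) : ⁅w, s ⁅x, y⁆⁆ = ⁅w, ⁅s x, s y⁆⁆ :=
    lie_right_eq_of_sub_mem_center (hφ.section_lie_sub_mem_center hs x y) w
  refine ⟨fun x x' y => ?_, fun x y y' => ?_, fun x y x' y' => ?_, fun x => ?_⟩ <;>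
    simp only [LinearMap.compl₁₂_apply, LieHom.coe_toLinearMap, LieModule.toEnd_apply_apply]
  · rw [hl, hr, hr, lie_lie]
  · rw [hr, hl, hl, leibniz_lie, ← lie_skew (s y'), ← lie_skew (s y), ← lie_skew _ (s y)]
    simp only [neg_lie]
    abel
  · rw [hl, hr, ← lie_skew (s y), neg_lie, neg_neg]
  · exact lie_self _

end Section

include hφ in
theorem exteriorCenter_subset_image_center :
    exteriorCenter k L ⊆ φ '' LieAlgebra.center k E := by
  intro x hx
  obtain ⟨s, hs⟩ := φ.toLinearMap.exists_rightInverse_of_surjective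
    (LinearMap.range_eq_top.2 hφ.1)
  have hs' (x : L) : φ (s x) = x := LinearMap.congr_fun hs x
  refine ⟨s x, (LieModule.mem_maxTrivSubmodule k E E _).2 fun w => ?_, hs' x⟩
  have hwedge := ExteriorSquare.lift_wedge (hφ.isExteriorPairing_section hs') x (φ w)
  simp only [LinearMap.compl₁₂_apply, LieHom.coe_toLinearMap,
    LieModule.toEnd_apply_apply] at hwedge
  rw [lie_left_eq_of_sub_mem_center (hφ.sub_section_mem_center hs' w), ← lie_skew, ← hwedge,
    hx (φ w), map_zero, neg_zero]

end IsCentralExtension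

theorem exteriorCenter_subset_epicenter : exteriorCenter k L ⊆ epicenter k L := by
  intro x hx
  rw [epicenter, LieSubmodule.coe_sInf, Set.mem_iInter₂]
  rintro I ⟨E, _, _, φ, hφ, hI⟩
  rw [hI]
  exact hφ.exteriorCenter_subset_image_center hx

theorem IsCapable.epicenter_eq_bot (h : IsCapable k L) : epicenter k L = ⊥ := by
  obtain ⟨E, _, _, ⟨ι⟩⟩ := h
  set φ := ι.symm.toLieHom.comp (lieQuotMk k E (LieAlgebra.center k E))
  have hker (w : E) : φ w = 0 ↔ w ∈ LieAlgebra.center k E :=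
    ι.symm.toLinearEquiv.map_eq_zero_iff.trans LieSubmodule.Quotient.mk_eq_zero'
  have hφ : IsCentralExtension k L φ :=
    ⟨ι.symm.surjective.comp (Submodule.mkQ_surjective _), fun w hw => (hker w).1 hw⟩
  refine eq_bot_iff.2 (sInf_le ⟨E, _, _, φ, hφ, ?_⟩)
  ext x
  constructor
  · rintro rfl
    exact ⟨0, zero_mem _, map_zero φ⟩
  · rintro ⟨w, hw, rfl⟩
    exact (hker w).2 hw

theorem IsCapable.eq_zero_of_mem_exteriorCenter (h : IsCapable k L) {x : L}
    (hx : x ∈ exteriorCenter k L) : x = 0 := by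
  have hx' := exteriorCenter_subset_epicenter hx
  rwa [h.epicenter_eq_bot, SetLike.mem_coe, LieSubmodule.mem_bot] at hx'

end CentralExtension

section Heisenberg

variable {k : Type} [Field k] {L : Type u} [LieRing L] [LieAlgebra k L]

lemma lie_eq_zero_comm {x y : L} : ⁅x, y⁆ = 0 ↔ ⁅y, x⁆ = 0 := by
  rw [← lie_skew, neg_eq_zero]

lemma exists_derived_eq_span_lie (h : finrank k (derived k L) = 1) :
    ∃ a b : L, ⁅a, b⁆ ≠ 0 ∧ (derived k L : Submodule k L) = k ∙ ⁅a, b⁆ := by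
  replace h : finrank k (derived k L : Submodule k L) = 1 := h
  have : FiniteDimensional k (derived k L : Submodule k L) := Module.finite_of_finrank_eq_succ h
  obtain ⟨a, b, hab⟩ : ∃ a b : L, ⁅a, b⁆ ≠ 0 := by
    by_contra! hall
    have hbot : derived k L = ⊥ :=
      (LieSubmodule.lie_eq_bot_iff _ _).2 fun x _ y _ => hall x y
    rw [hbot, LieIdeal.toLieSubalgebra_toSubmodule, LieSubmodule.bot_toSubmodule,
      finrank_bot] at h
    exact zero_ne_one h
  refine ⟨a, b, hab, (Submodule.eq_of_le_of_finrank_le ?_ ?_).symm⟩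
  · rw [Submodule.span_singleton_le_iff_mem]
    exact LieSubmodule.lie_mem_lie (LieSubmodule.mem_top a) (LieSubmodule.mem_top b)
  · rw [finrank_span_singleton hab, h]

lemma exists_lie_eq_of_notMem_center {a b c : L} (hz : ∀ x y : L, ⁅x, y⁆ ∈ k ∙ ⁅a, b⁆)
    (hca : ⁅c, a⁆ = 0) (hcb : ⁅c, b⁆ = 0) (hc : c ∉ LieAlgebra.center k L) :
    ∃ d, ⁅c, d⁆ = ⁅a, b⁆ ∧ ⁅d, a⁆ = 0 ∧ ⁅d, b⁆ = 0 := by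
  obtain ⟨x, hx⟩ : ∃ x : L, ⁅c, x⁆ ≠ 0 := by
    by_contra! h
    exact hc ((LieModule.mem_maxTrivSubmodule k L L c).2 fun x => lie_eq_zero_comm.1 (h x))
  obtain ⟨γ, hγ⟩ := Submodule.mem_span_singleton.1 (hz c x)
  obtain ⟨p, hp⟩ := Submodule.mem_span_singleton.1 (hz a x)
  obtain ⟨q, hq⟩ := Submodule.mem_span_singleton.1 (hz b x)
  have hγ0 : γ ≠ 0 := by
    rintro rfl
    exact hx (by rw [← hγ, zero_smul])
  -- `x + q • a - p • b` commutes with `a` and `b`, and its bracket with `c` is still `γ • ⁅a, b⁆`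
  refine ⟨γ⁻¹ • (x + q • a - p • b), ?_, ?_, ?_⟩
  · rw [lie_smul, lie_sub, lie_add, lie_smul, lie_smul, hca, hcb, ← hγ, smul_zero, smul_zero,
      add_zero, sub_zero, smul_smul, inv_mul_cancel₀ hγ0, one_smul]
  · rw [lie_eq_zero_comm, lie_smul, lie_sub, lie_add, lie_smul, lie_smul, lie_self, ← hp]
    simp
  · rw [lie_eq_zero_comm, lie_smul, lie_sub, lie_add, lie_smul, lie_smul, lie_self, ← hq,
      ← lie_skew b a, smul_neg, add_neg_cancel, smul_zero, sub_zero, smul_zero]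

variable [FiniteDimensional k L]

lemma finrank_le_finrank_ker_ad_add_one {z : L} (hz : ∀ x y : L, ⁅x, y⁆ ∈ k ∙ z) (x : L) :
    finrank k L ≤ finrank k (LinearMap.ker (LieAlgebra.ad k L x)) + 1 := by
  have hrange : LinearMap.range (LieAlgebra.ad k L x) ≤ k ∙ z := by
    rintro _ ⟨y, rfl⟩
    exact hz x y
  have hle : finrank k (LinearMap.range (LieAlgebra.ad k L x)) ≤ 1 :=
    (Submodule.finrank_mono hrange).trans ((finrank_span_le_card ({z} : Set L)).trans (by simp))
  have := LinearMap.finrank_range_add_finrank_ker (LieAlgebra.ad k L x)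
  omega

lemma exists_lie_eq_zero_notMem_center {z : L} (hz : ∀ x y : L, ⁅x, y⁆ ∈ k ∙ z)
    (hdim : finrank k (LieAlgebra.center k L) + 3 ≤ finrank k L) (a b : L) :
    ∃ c, ⁅c, a⁆ = 0 ∧ ⁅c, b⁆ = 0 ∧ c ∉ LieAlgebra.center k L := by
  let Ka := LinearMap.ker (LieAlgebra.ad k L a)
  let Kb := LinearMap.ker (LieAlgebra.ad k L b)
  have hsup := Submodule.finrank_sup_add_finrank_inf_eq Ka Kb
  have hsup_le := Submodule.finrank_le (Ka ⊔ Kb)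
  have ha : finrank k L ≤ finrank k Ka + 1 := finrank_le_finrank_ker_ad_add_one hz a
  have hb : finrank k L ≤ finrank k Kb + 1 := finrank_le_finrank_ker_ad_add_one hz b
  have hW : ¬Ka ⊓ Kb ≤ LieAlgebra.center k L := fun hle => by
    have : finrank k (Ka ⊓ Kb : Submodule k L) ≤ finrank k (LieAlgebra.center k L) :=
      Submodule.finrank_mono hle
    omega
  obtain ⟨c, hc, hcZ⟩ := SetLike.not_le_iff_exists.1 hW
  exact ⟨c, lie_eq_zero_comm.1 (LinearMap.mem_ker.1 hc.1), lie_eq_zero_comm.1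
    (LinearMap.mem_ker.1 hc.2), hcZ⟩

theorem isBracketOfCommutingPairs_lie {a b : L} (hz : ∀ x y : L, ⁅x, y⁆ ∈ k ∙ ⁅a, b⁆)
    (hdim : finrank k (LieAlgebra.center k L) + 3 ≤ finrank k L) :
    IsBracketOfCommutingPairs ⁅a, b⁆ := by
  obtain ⟨c, hca, hcb, hc⟩ := exists_lie_eq_zero_notMem_center hz hdim a b
  obtain ⟨d, hcd, hda, hdb⟩ := exists_lie_eq_of_notMem_center hz hca hcb hc
  exact ⟨a, b, c, d, rfl, hcd, hca, hcb, hda, hdb⟩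

theorem IsHeisenberg.exists_isBracketOfCommutingPairs {m : ℕ} (hL : IsHeisenberg k L m)
    (hm : 2 ≤ m) :
    ∃ z : L, z ≠ 0 ∧ IsBracketOfCommutingPairs z ∧ ∀ x y : L, ⁅x, y⁆ ∈ k ∙ z := by
  obtain ⟨hcenter, hdim, hderived⟩ := hL
  obtain ⟨a, b, hab, hspan⟩ := exists_derived_eq_span_lie hderived
  have hz (x y : L) : ⁅x, y⁆ ∈ k ∙ ⁅a, b⁆ :=
    hspan ▸ LieSubmodule.lie_mem_lie (LieSubmodule.mem_top x) (LieSubmodule.mem_top y)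
  refine ⟨_, hab, isBracketOfCommutingPairs_lie hz ?_, hz⟩
  rw [← hcenter, hderived, hdim]
  omega

end Heisenberg

theorem heisenberg_sum_abelian_not_capable_general (k : Type) [Field k] (H A : Type u) [LieRing H]
    [LieAlgebra k H] [LieRing A] [LieAlgebra k A] [Module.Finite k H]
    (m : ℕ) (hm : 2 ≤ m) (hH : IsHeisenberg k H m) (hA : IsLieAbelian A) :
    Function.Bijective (extSqMap k (H × A) (derived k (H × A))) ∧
    ¬ IsCapable k (H × A) := by
  obtain ⟨z, hz0, hpairs, hspan⟩ := hH.exists_isBracketOfCommutingPairs hm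
  have hspanL (p q : H × A) : ⁅p, q⁆ ∈ k ∙ LieHom.inl k H A z := by
    obtain ⟨e, he⟩ := Submodule.mem_span_singleton.1 (hspan p.1 q.1)
    exact Submodule.mem_span_singleton.2 ⟨e, by simp [he, hA.trivial]⟩
  have hpairsL := hpairs.map (LieHom.inl k H A)
  exact ⟨extSqMap_derived_bijective (hpairsL.derived_subset_exteriorCenter hspanL),
    fun hcap => hz0 (congrArg Prod.fst
      (hcap.eq_zero_of_mem_exteriorCenter (hpairsL.mem_exteriorCenter hspanL)))⟩

/-- for `m ≥ 2` and `L = H(m) ⊕ A(j)`, the natural map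
`L ∧ L → (L/H(m)²) ∧ (L/H(m)²)` (where `H(m)² = L²`) is an isomorphism;
in particular `L` is not capable. -/
theorem heisenberg_sum_abelian_not_capable (k : Type) [Field k] (H A : Type u) [LieRing H]
    [LieAlgebra k H] [LieRing A] [LieAlgebra k A] [Module.Finite k H] [Module.Finite k A]
    (m j : ℕ) (hm : 2 ≤ m) (hH : IsHeisenberg k H m) (hA : IsLieAbelian A)
    (hAd : Module.finrank k A = j) :
    Function.Bijective (extSqMap k (H × A) (derived k (H × A))) ∧
    ¬ IsCapable k (H × A) :=
  heisenberg_sum_abelian_not_capable_general k H A m hm hH hA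
end
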